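/- Let σ > 0 and let Z be a real random variable whose law is the centered Gaussian measure on ℝ with variance σ². Then there exist constants c, C > 0 such that for every real t ≥ 1, c/√t ≤ E[(Φ(Z/(σ²·√t)) − Φ(−Z/(σ²·√t)))·1_{Z>0}] ≤ C/√t. -/

import Mathlib

open Real Filter MeasureTheory

/-- Standard normal density. -/
noncomputable def stdPhi (u : ℝ) : ℝ := (Real.sqrt (2 * Real.pi))⁻¹ * Real.exp (-u ^ 2 / 2)

/-- Standard normal distribution function. -/
noncomputable def stdCdf (u : ℝ) : ℝ := ∫ s in Set.Iic u, stdPhi s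

/-- Standard normal survivor function. -/
noncomputable def stdSurv (u : ℝ) : ℝ := 1 - stdCdf u

noncomputable def fFun (x y : ℝ) : ℝ := stdSurv (x - y) - Real.exp (2 * x * y) * stdSurv (x + y)

noncomputable def gFun (x y : ℝ) : ℝ := 1 - x * stdSurv (x + y) / stdPhi (x + y)

/-!
On `[-u, u]` the standard normal density lies between `φ(1)` (when `u ≤ 1`) and `φ(0)`, so
`2φ(1)u ≤ Φ(u) − Φ(−u) ≤ 2φ(0)u`. Put `a = σ²√t ≥ σ²`. Integrating the upper bound at `u = Z/a`
against the law of `Z` gives `E ≤ 2φ(0)E|Z|/a`; integrating the lower bound over the event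
`0 < Z ≤ σ²`, where `Z/a ≤ 1`, gives `E ≥ 2φ(1)E[Z; 0 < Z ≤ σ²]/a`, and this truncated mean is
positive since the Gaussian law charges every interval.
-/

open ProbabilityTheory

lemma stdPhi_eq_gaussianPDFReal : stdPhi = gaussianPDFReal 0 1 := by
  funext u
  simp [stdPhi, gaussianPDFReal]

lemma integrable_stdPhi : Integrable stdPhi := by
  rw [stdPhi_eq_gaussianPDFReal]
  exact integrable_gaussianPDFReal 0 1

lemma stdPhi_pos (u : ℝ) : 0 < stdPhi u := by
  rw [stdPhi_eq_gaussianPDFReal]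
  exact gaussianPDFReal_pos 0 1 u one_ne_zero

lemma stdPhi_le_stdPhi_zero (u : ℝ) : stdPhi u ≤ stdPhi 0 := by
  unfold stdPhi
  gcongr _ * ?_
  exact Real.exp_le_exp.2 (by nlinarith [sq_nonneg u])

lemma stdPhi_one_le {u : ℝ} (hu : |u| ≤ 1) : stdPhi 1 ≤ stdPhi u := by
  unfold stdPhi
  gcongr _ * ?_
  exact Real.exp_le_exp.2 (by nlinarith [abs_le.1 hu, sq_abs u])

lemma stdCdf_sub_stdCdf (a b : ℝ) : stdCdf b - stdCdf a = ∫ s in a..b, stdPhi s :=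
  intervalIntegral.integral_Iic_sub_Iic integrable_stdPhi.integrableOn
    integrable_stdPhi.integrableOn

lemma monotone_stdCdf : Monotone stdCdf := fun a b hab => by
  have := intervalIntegral.integral_nonneg (μ := volume) hab fun s _ => (stdPhi_pos s).le
  linarith [stdCdf_sub_stdCdf a b]

noncomputable def stdCentralMass (u : ℝ) : ℝ := stdCdf u - stdCdf (-u)

lemma stdCentralMass_le {u : ℝ} (hu : 0 ≤ u) : stdCentralMass u ≤ 2 * stdPhi 0 * u := by
  have := intervalIntegral.integral_mono_on (a := -u) (b := u) (by linarith)
    integrable_stdPhi.intervalIntegrable intervalIntegrable_const fun s _ => stdPhi_le_stdPhi_zero s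
  rw [intervalIntegral.integral_const, smul_eq_mul] at this
  rw [stdCentralMass, stdCdf_sub_stdCdf]
  linarith

lemma le_stdCentralMass {u : ℝ} (hu₀ : 0 ≤ u) (hu₁ : u ≤ 1) :
    2 * stdPhi 1 * u ≤ stdCentralMass u := by
  have := intervalIntegral.integral_mono_on (a := -u) (b := u) (by linarith)
    intervalIntegrable_const integrable_stdPhi.intervalIntegrable
    fun s hs => stdPhi_one_le (abs_le.2 ⟨by linarith [hs.1], by linarith [hs.2]⟩)
  rw [intervalIntegral.integral_const, smul_eq_mul] at this
  rw [stdCentralMass, stdCdf_sub_stdCdf]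
  linarith

lemma measurable_stdCentralMass : Measurable stdCentralMass :=
  monotone_stdCdf.measurable.sub (monotone_stdCdf.measurable.comp measurable_neg)

lemma stdCentralMass_nonneg {u : ℝ} (hu : 0 ≤ u) : 0 ≤ stdCentralMass u :=
  sub_nonneg.2 (monotone_stdCdf (by linarith))

/-- The integrand of the theorem, with `a = σ²√t`. -/
noncomputable def posCentralMass (a z : ℝ) : ℝ :=
  stdCentralMass (z / a) * Set.indicator (Set.Ioi 0) (fun _ => (1 : ℝ)) z

lemma measurable_posCentralMass (a : ℝ) : Measurable (posCentralMass a) :=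
  (measurable_stdCentralMass.comp (measurable_id.div_const a)).mul
    (measurable_const.indicator measurableSet_Ioi)

section posCentralMass

variable {a : ℝ}

lemma posCentralMass_of_pos {z : ℝ} (hz : 0 < z) :
    posCentralMass a z = stdCentralMass (z / a) := by
  simp [posCentralMass, hz]

lemma posCentralMass_of_nonpos {z : ℝ} (hz : z ≤ 0) : posCentralMass a z = 0 := by
  simp [posCentralMass, hz]

lemma posCentralMass_nonneg (ha : 0 ≤ a) (z : ℝ) : 0 ≤ posCentralMass a z := by
  rcases lt_or_ge 0 z with hz | hz
  · rw [posCentralMass_of_pos hz]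
    exact stdCentralMass_nonneg (div_nonneg hz.le ha)
  · rw [posCentralMass_of_nonpos hz]

lemma posCentralMass_le (ha : 0 < a) (z : ℝ) :
    posCentralMass a z ≤ 2 * stdPhi 0 / a * |z| := by
  rcases lt_or_ge 0 z with hz | hz
  · rw [posCentralMass_of_pos hz, abs_of_pos hz]
    calc stdCentralMass (z / a) ≤ 2 * stdPhi 0 * (z / a) := stdCentralMass_le (by positivity)
      _ = 2 * stdPhi 0 / a * z := by ring
  · rw [posCentralMass_of_nonpos hz]
    have := stdPhi_pos 0
    positivity

lemma le_posCentralMass {b z : ℝ} (hba : b ≤ a) (hz : z ∈ Set.Ioc 0 b) :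
    2 * stdPhi 1 / a * z ≤ posCentralMass a z := by
  have ha : 0 < a := hz.1.trans_le (hz.2.trans hba)
  rw [posCentralMass_of_pos hz.1, div_mul_eq_mul_div, mul_div_assoc]
  exact le_stdCentralMass (div_nonneg hz.1.le ha.le) ((div_le_one ha).2 (hz.2.trans hba))

variable {μ : Measure ℝ}

lemma integrable_posCentralMass (ha : 0 < a) (hμ : Integrable id μ) :
    Integrable (posCentralMass a) μ :=
  (hμ.abs.const_mul _).mono' (measurable_posCentralMass a).aestronglyMeasurable
    (ae_of_all _ fun z => by
      rw [Real.norm_of_nonneg (posCentralMass_nonneg ha.le z)]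
      exact posCentralMass_le ha z)

lemma integral_posCentralMass_le (ha : 0 < a) (hμ : Integrable id μ) :
    ∫ z, posCentralMass a z ∂μ ≤ 2 * stdPhi 0 / a * ∫ z, |z| ∂μ := by
  rw [← integral_const_mul]
  exact integral_mono (integrable_posCentralMass ha hμ) (hμ.abs.const_mul _)
    (posCentralMass_le ha)

lemma le_integral_posCentralMass {b : ℝ} (hb : 0 < b) (hba : b ≤ a) (hμ : Integrable id μ) :
    2 * stdPhi 1 / a * ∫ z in Set.Ioc 0 b, z ∂μ ≤ ∫ z, posCentralMass a z ∂μ := by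
  have ha := hb.trans_le hba
  rw [← integral_const_mul]
  calc ∫ z in Set.Ioc 0 b, 2 * stdPhi 1 / a * z ∂μ
      ≤ ∫ z in Set.Ioc 0 b, posCentralMass a z ∂μ :=
        setIntegral_mono_on (hμ.const_mul _).integrableOn
          (integrable_posCentralMass ha hμ).integrableOn measurableSet_Ioc
          fun z hz => le_posCentralMass hba hz
    _ ≤ ∫ z, posCentralMass a z ∂μ :=
        setIntegral_le_integral (integrable_posCentralMass ha hμ)
          (ae_of_all _ (posCentralMass_nonneg ha.le))

end posCentralMass

lemma setIntegral_Ioc_id_pos {μ : Measure ℝ} (hμ : volume ≪ μ) (hint : Integrable id μ)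
    {b : ℝ} (hb : 0 < b) : 0 < ∫ z in Set.Ioc 0 b, z ∂μ := by
  have hmass : μ (Set.Ioc 0 b) ≠ 0 := fun h => by simpa [hb.not_ge] using hμ h
  refine (setIntegral_pos_iff_support_of_nonneg_ae
    ((ae_restrict_iff' measurableSet_Ioc).2 (ae_of_all _ fun z hz => hz.1.le))
    hint.integrableOn).2 ?_
  rwa [Set.inter_eq_right.2 fun z hz => hz.1.ne', pos_iff_ne_zero]

/-- Two-sided bound of order 1/√t for the Gaussian expectation
E[(Φ(Z/(σ²√t)) − Φ(−Z/(σ²√t)))·1_{Z>0}]. -/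
theorem gaussian_expectation_two_sided (σ : ℝ) (hσ : 0 < σ) :
    ∃ c C : ℝ, 0 < c ∧ 0 < C ∧ ∀ t : ℝ, 1 ≤ t →
      c / Real.sqrt t ≤
        (∫ z, (stdCdf (z / (σ ^ 2 * Real.sqrt t)) - stdCdf (-(z / (σ ^ 2 * Real.sqrt t)))) *
            Set.indicator (Set.Ioi (0 : ℝ)) (fun _ => (1 : ℝ)) z
          ∂(ProbabilityTheory.gaussianReal 0 (Real.toNNReal (σ ^ 2)))) ∧
      (∫ z, (stdCdf (z / (σ ^ 2 * Real.sqrt t)) - stdCdf (-(z / (σ ^ 2 * Real.sqrt t)))) *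
            Set.indicator (Set.Ioi (0 : ℝ)) (fun _ => (1 : ℝ)) z
          ∂(ProbabilityTheory.gaussianReal 0 (Real.toNNReal (σ ^ 2)))) ≤ C / Real.sqrt t := by
  set μ := gaussianReal 0 (σ ^ 2).toNNReal
  have hσ2 : 0 < σ ^ 2 := by positivity
  have hint : Integrable id μ := (memLp_id_gaussianReal 1).integrable le_rfl
  have hK : 0 < ∫ z in Set.Ioc 0 (σ ^ 2), z ∂μ :=
    setIntegral_Ioc_id_pos (gaussianReal_absolutelyContinuous' 0 (by simpa using hσ.ne')) hint hσ2
  set c := 2 * stdPhi 1 * (∫ z in Set.Ioc 0 (σ ^ 2), z ∂μ) / σ ^ 2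
  set C := 2 * stdPhi 0 * (∫ z, |z| ∂μ) / σ ^ 2
  have bounds (t : ℝ) (ht : 1 ≤ t) :
      c / √t ≤ ∫ z, posCentralMass (σ ^ 2 * √t) z ∂μ ∧
        ∫ z, posCentralMass (σ ^ 2 * √t) z ∂μ ≤ C / √t := by
    have hscale : σ ^ 2 ≤ σ ^ 2 * √t := le_mul_of_one_le_right hσ2.le (Real.one_le_sqrt.2 ht)
    refine ⟨?_, ?_⟩
    · rw [div_div, ← div_mul_eq_mul_div]
      exact le_integral_posCentralMass hσ2 hscale hint
    · rw [div_div, ← div_mul_eq_mul_div]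
      exact integral_posCentralMass_le (hσ2.trans_le hscale) hint
  have hc : 0 < c := by have := stdPhi_pos 1; positivity
  -- `0 < C` follows by comparing the two bounds at `t = 1`.
  have hcC : c ≤ C := by simpa using (bounds 1 le_rfl).1.trans (bounds 1 le_rfl).2
  exact ⟨c, C, hc, hc.trans_le hcC, bounds⟩
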